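/- Consider the relation symbol R of arity 3 whose first position is the key, and the query q₅ = R(x; y x) ∧ R(y; x u), i.e. q₅ = AB with A = (x,y,x) and B = (y,x,u) where x,y,u are distinct variables. Then: (i) for every database D and all facts d,e,f ∈ D with D ⊨ q₅(de) and D ⊨ q₅(ef), at least two of d,e,f are key-equal; and (ii) consequently q₅ does not admit a tripath. -/

import Mathlib

/- Consistent query answering framework: a single relation symbol of arity `n`
   whose first `l` positions form the primary key. Facts are `Fin n → Elem`,
   atoms are `Fin n → Var`. -/

namespace CQA

/-- Key-equality: the tuples of the first `l` entries coincide. -/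
def keyEq (l : ℕ) {n : ℕ} {α : Type*} (s t : Fin n → α) : Prop :=
  ∀ i : Fin n, (i : ℕ) < l → s i = t i

/-- The set of entries occurring in the first `l` (key) positions of a tuple. -/
def keySet (l : ℕ) {n : ℕ} {α : Type*} (t : Fin n → α) : Set α :=
  {x | ∃ i : Fin n, (i : ℕ) < l ∧ t i = x}

/-- The set of all entries of a tuple. -/
def varsSet {n : ℕ} {α : Type*} (t : Fin n → α) : Set α :=
  Set.range t

/-- A (two-atom, Boolean, self-join) query `q = AB` is a pair of atoms. -/
abbrev Query (n : ℕ) (Var : Type*) := (Fin n → Var) × (Fin n → Var)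

variable {n : ℕ} {Elem Var : Type*}

/-- The pair of facts `(a, b)` matches the two atoms of `q` via a single assignment `μ`. -/
def solPair (q : Query n Var) (a b : Fin n → Elem) : Prop :=
  ∃ μ : Var → Elem, (∀ i, μ (q.1 i) = a i) ∧ (∀ i, μ (q.2 i) = b i)

/-- `D ⊨ q(ab)` : `(a,b)` is a solution to `q` in `D`. -/
def Sol (q : Query n Var) (D : Set (Fin n → Elem)) (a b : Fin n → Elem) : Prop :=
  a ∈ D ∧ b ∈ D ∧ solPair q a b

/-- `D ⊨ q{ab}` : `(a,b)` or `(b,a)` is a solution to `q` in `D`. -/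
def SolSym (q : Query n Var) (D : Set (Fin n → Elem)) (a b : Fin n → Elem) : Prop :=
  Sol q D a b ∨ Sol q D b a

/-- The set `q(D)` of solutions to `q` in `D`. -/
def solSet (q : Query n Var) (D : Set (Fin n → Elem)) :
    Set ((Fin n → Elem) × (Fin n → Elem)) :=
  {p | Sol q D p.1 p.2}

/-- `D ⊨ q` : some solution to `q` exists in `D`. -/
def Sat (q : Query n Var) (D : Set (Fin n → Elem)) : Prop :=
  ∃ a b, Sol q D a b

/-- A database is consistent if it contains no two distinct key-equal facts. -/
def Consistent (l : ℕ) (D : Set (Fin n → Elem)) : Prop :=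
  ∀ a ∈ D, ∀ b ∈ D, keyEq l a b → a = b

/-- `r` is a repair of `D` : a maximal consistent subset of `D`. -/
def Repair (l : ℕ) (D r : Set (Fin n → Elem)) : Prop :=
  r ⊆ D ∧ Consistent l r ∧ ∀ s, r ⊆ s → s ⊆ D → Consistent l s → s = r

/-- `D ⊨ certain(q)` : all repairs of `D` satisfy `q`. -/
def Certain (l : ℕ) (q : Query n Var) (D : Set (Fin n → Elem)) : Prop :=
  ∀ r, Repair l D r → Sat q r

/-- The block of the fact `a` in `D`: all facts of `D` key-equal to `a`. -/
def Block (l : ℕ) (D : Set (Fin n → Elem)) (a : Fin n → Elem) : Set (Fin n → Elem) :=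
  {b ∈ D | keyEq l a b}

/-- A `k`-set of `D`: at most `k` facts of `D`, at most one from each block. -/
def kSet (l k : ℕ) (D S : Set (Fin n → Elem)) : Prop :=
  S ⊆ D ∧ S.Finite ∧ S.ncard ≤ k ∧ Consistent l S

/-- A collection `𝒮` of sets of facts is closed under the two rules defining `Δ_k(q,D)`:
  (i) every `k`-set satisfying `q` is in `𝒮`, and (ii) if for a `k`-set `S` there is
  a block of `D` each of whose facts `u` admits a subset `S' ⊆ S ∪ {u}` that is a
  `k`-set belonging to `𝒮`, then `S ∈ 𝒮`. -/
def DeltaClosed (l k : ℕ) (q : Query n Var) (D : Set (Fin n → Elem))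
    (𝒮 : Set (Set (Fin n → Elem))) : Prop :=
  (∀ S, kSet l k D S → Sat q S → S ∈ 𝒮) ∧
  (∀ S, kSet l k D S → (∃ x ∈ D, ∀ u ∈ D, keyEq l x u →
      ∃ S', S' ⊆ S ∪ {u} ∧ kSet l k D S' ∧ S' ∈ 𝒮) → S ∈ 𝒮)

/-- `Δ_k(q,D)`: the least collection of `k`-sets of `D` closed under the two rules
(the intersection of all closed collections). -/
def Delta (l k : ℕ) (q : Query n Var) (D : Set (Fin n → Elem)) :
    Set (Set (Fin n → Elem)) :=
  ⋂₀ {𝒮 | DeltaClosed l k q D 𝒮}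

/-- `q = AB` is 2way-determined. -/
def TwoWayDet (l : ℕ) (q : Query n Var) : Prop :=
  ¬ keySet l q.1 ⊆ keySet l q.2 ∧ ¬ keySet l q.2 ⊆ keySet l q.1 ∧
  keySet l q.1 ⊆ varsSet q.2 ∧ keySet l q.2 ⊆ varsSet q.1

/-- The zig-zag property of a query `q`, relative to databases over `Elem`. -/
def ZigZag (l : ℕ) (q : Query n Var) (Elem : Type*) : Prop :=
  ∀ D : Set (Fin n → Elem), D.Finite →
    ∀ a b b' c : Fin n → Elem, a ∈ D → b ∈ D → b' ∈ D → c ∈ D →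
      ¬ keyEq l a c → a ≠ b → keyEq l b b' →
      Sol q D a b → Sol q D c b' → Sol q D a b'

/-- `rkey(a, r)`: facts of `r` whose key entries are included in those of `a`. -/
def rkey (l : ℕ) (r : Set (Fin n → Elem)) (a : Fin n → Elem) : Set (Fin n → Elem) :=
  {c ∈ r | keySet l c ⊆ keySet l a}

open Classical in
/-- `g(e)`, the set of entries of the tuple `g̅(e)`, for `e` branching with `d, f`. -/
noncomputable def gSet (l : ℕ) (d e f : Fin n → Elem) : Set Elem :=
  if keySet l d ⊆ keySet l e ∧ ¬ keySet l f ⊆ keySet l e then keySet l d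
  else if ¬ keySet l d ⊆ keySet l e ∧ keySet l f ⊆ keySet l e then keySet l f
  else if keySet l d ⊆ keySet l f ∧ keySet l f ⊆ keySet l e then keySet l d
  else if keySet l f ⊆ keySet l d ∧ keySet l d ⊆ keySet l e then keySet l f
  else keySet l e

/-- A tripath of `q`: a database `Θ`, each of whose blocks has at most two facts,
whose blocks (indexed by `Fin m`) are arranged as a rooted tree with exactly one root
block and exactly two leaf blocks; the root block has the single fact `a(root)`, leaf
blocks have the single fact `b(leaf)`, all other blocks have exactly the two facts
`a(B) ≠ b(B)`; if `B` is the parent of `B'` then `Θ ⊨ q{a(B) b(B')}`; the (unique)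
branching block `B` with its two children `B', B''` gives the center `d e f` =
`b(B') a(B) b(B'')` with `(d,e)` and `(e,f)` distinct solutions; and `g(e)` is not
included in the key of the root fact nor of either leaf fact. -/
structure Tripath (l : ℕ) (q : Query n Var) (Θ : Set (Fin n → Elem)) where
  finite : Θ.Finite
  m : ℕ
  blk : Fin m → Set (Fin n → Elem)
  blk_is_block : ∀ i, ∃ x ∈ Θ, blk i = Block l Θ x
  blk_cover : Θ = ⋃ i, blk i
  blk_inj : Function.Injective blk
  blk_card : ∀ i, (blk i).ncard ≤ 2
  parent : Fin m → Option (Fin m)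
  root : Fin m
  parent_root : parent root = none
  parent_ne_root : ∀ i, i ≠ root → ∃ j, parent i = some j
  reach_root : ∀ i, Relation.ReflTransGen (fun x y => parent x = some y) i root
  leaf1 : Fin m
  leaf2 : Fin m
  leaf_ne : leaf1 ≠ leaf2
  leaf1_leaf : ∀ j, parent j ≠ some leaf1
  leaf2_leaf : ∀ j, parent j ≠ some leaf2
  leaves_eq : ∀ i, (∀ j, parent j ≠ some i) → i = leaf1 ∨ i = leaf2
  aFact : Fin m → (Fin n → Elem)
  bFact : Fin m → (Fin n → Elem)
  root_blk : blk root = {aFact root}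
  leaf1_blk : blk leaf1 = {bFact leaf1}
  leaf2_blk : blk leaf2 = {bFact leaf2}
  other_blk : ∀ i, i ≠ root → i ≠ leaf1 → i ≠ leaf2 →
    aFact i ≠ bFact i ∧ blk i = {aFact i, bFact i}
  adj_sol : ∀ i j, parent j = some i → SolSym q Θ (aFact i) (bFact j)
  branch : Fin m
  child1 : Fin m
  child2 : Fin m
  child_ne : child1 ≠ child2
  parent_child1 : parent child1 = some branch
  parent_child2 : parent child2 = some branch
  center_sol1 : Sol q Θ (bFact child1) (aFact branch)
  center_sol2 : Sol q Θ (aFact branch) (bFact child2)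
  center_distinct : (bFact child1, aFact branch) ≠ (aFact branch, bFact child2)
  g_root : ¬ gSet l (bFact child1) (aFact branch) (bFact child2) ⊆ keySet l (aFact root)
  g_leaf1 : ¬ gSet l (bFact child1) (aFact branch) (bFact child2) ⊆ keySet l (bFact leaf1)
  g_leaf2 : ¬ gSet l (bFact child1) (aFact branch) (bFact child2) ⊆ keySet l (bFact leaf2)

namespace Tripath

variable {l : ℕ} {q : Query n Var} {Θ : Set (Fin n → Elem)}

/-- The fact `d` of the center `def` of a tripath. -/
def dc (T : Tripath l q Θ) : Fin n → Elem := T.bFact T.child1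
/-- The fact `e` of the center `def` of a tripath. -/
def ec (T : Tripath l q Θ) : Fin n → Elem := T.aFact T.branch
/-- The fact `f` of the center `def` of a tripath. -/
def fc (T : Tripath l q Θ) : Fin n → Elem := T.bFact T.child2
/-- The root fact `u₀` of a tripath. -/
def u0 (T : Tripath l q Θ) : Fin n → Elem := T.aFact T.root
/-- The leaf fact `u₁` of a tripath. -/
def u1 (T : Tripath l q Θ) : Fin n → Elem := T.bFact T.leaf1
/-- The leaf fact `u₂` of a tripath. -/
def u2 (T : Tripath l q Θ) : Fin n → Elem := T.bFact T.leaf2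

/-- The center of the tripath is a fork (`(f,d)` is not a solution). -/
def IsFork (T : Tripath l q Θ) : Prop := ¬ Sol q Θ T.fc T.dc

/-- The center of the tripath is a triangle (`(f,d)` is a solution). -/
def IsTriangle (T : Tripath l q Θ) : Prop := Sol q Θ T.fc T.dc

/-- Variable-niceness witnessed by the elements `x, y, z`. -/
def VariableNiceWith (T : Tripath l q Θ) (x y z : Elem) : Prop :=
  x ∈ keySet l T.dc ∧ y ∈ keySet l T.ec ∧ z ∈ keySet l T.fc ∧
  ({x, y, z} : Set Elem) ∩ (keySet l T.u0 ∪ keySet l T.u1 ∪ keySet l T.u2) = ∅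

/-- The tripath is variable-nice. -/
def VariableNice (T : Tripath l q Θ) : Prop := ∃ x y z, T.VariableNiceWith x y z

/-- The tripath is solution-nice: the only solutions to `q` in `Θ` are those between a
parent block and a child block, plus possibly `(f, d)`. -/
def SolutionNice (T : Tripath l q Θ) : Prop :=
  ∀ a b, Sol q Θ a b →
    (∃ i j, T.parent j = some i ∧
      ((a = T.aFact i ∧ b = T.bFact j) ∨ (a = T.bFact j ∧ b = T.aFact i)))
    ∨ (a = T.fc ∧ b = T.dc)

/-- The tripath is nice. -/
def Nice (T : Tripath l q Θ) : Prop :=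
  (∃ x y z : Elem, T.VariableNiceWith x y z ∧
    ∃ w ∈ ({x, y, z} : Set Elem),
      ∀ c ∈ Θ, c ≠ T.u0 → c ≠ T.u1 → c ≠ T.u2 → w ∈ keySet l c) ∧
  T.SolutionNice ∧
  (∀ u ∈ ({T.u0, T.u1, T.u2} : Set (Fin n → Elem)),
    ∃ w ∈ keySet l u, ∀ c ∈ Θ, c ≠ u → w ∉ keySet l c)

end Tripath

/-- `D` contains a tripath of `q`: some subset of `D` is a tripath of `q`. -/
def ContainsTripath (l : ℕ) (q : Query n Var) (D : Set (Fin n → Elem)) : Prop :=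
  ∃ Θ ⊆ D, Nonempty (Tripath l q Θ)

/-- `q` admits a fork-tripath (over databases with elements in `Elem`). -/
def AdmitsForkTripath (l : ℕ) (q : Query n Var) (Elem : Type*) : Prop :=
  ∃ D : Set (Fin n → Elem), D.Finite ∧ ∃ Θ ⊆ D, ∃ T : Tripath l q Θ, T.IsFork

/-- `q` admits a triangle-tripath (over databases with elements in `Elem`). -/
def AdmitsTriangleTripath (l : ℕ) (q : Query n Var) (Elem : Type*) : Prop :=
  ∃ D : Set (Fin n → Elem), D.Finite ∧ ∃ Θ ⊆ D, ∃ T : Tripath l q Θ, T.IsTriangle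

/-- `q` admits a tripath (over databases with elements in `Elem`). -/
def AdmitsTripath (l : ℕ) (q : Query n Var) (Elem : Type*) : Prop :=
  ∃ D : Set (Fin n → Elem), D.Finite ∧ ContainsTripath l q D

/-- Edges of the solution graph `G(D,q)`: distinct facts `a, b` of `D` with `D ⊨ q{ab}`. -/
def gEdge (q : Query n Var) (D : Set (Fin n → Elem)) (a b : Fin n → Elem) : Prop :=
  a ≠ b ∧ a ∈ D ∧ b ∈ D ∧ SolSym q D a b

/-- The connected component of the fact `a` in the solution graph `G(D,q)`. -/
def gComp (q : Query n Var) (D : Set (Fin n → Elem)) (a : Fin n → Elem) :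
    Set (Fin n → Elem) :=
  {b ∈ D | Relation.ReflTransGen (gEdge q D) a b}

/-- `C` is a quasi-clique (of the solution graph of `D`): any two non-key-equal facts of
`C` are joined by an edge. -/
def QuasiClique (l : ℕ) (q : Query n Var) (D : Set (Fin n → Elem))
    (C : Set (Fin n → Elem)) : Prop :=
  ∀ a ∈ C, ∀ b ∈ C, ¬ keyEq l a b → SolSym q D a b

open Classical in
/-- `clique(a)`: the connected component of `a` in `G(D,q)` if it is a quasi-clique, and
`{a}` otherwise. -/
noncomputable def cliqueOf (l : ℕ) (q : Query n Var) (D : Set (Fin n → Elem))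
    (a : Fin n → Elem) : Set (Fin n → Elem) :=
  if QuasiClique l q D (gComp q D a) then gComp q D a else {a}

/-- Edges of the bipartite graph `H(D,q)`: between a block `B` of `D` and a set `c` of
the form `clique(y)`, when `B` contains a fact `a ∈ c` with `(a,a)` not a solution. -/
def HEdge (l : ℕ) (q : Query n Var) (D : Set (Fin n → Elem))
    (B c : Set (Fin n → Elem)) : Prop :=
  (∃ x ∈ D, B = Block l D x) ∧ (∃ y ∈ D, c = cliqueOf l q D y) ∧
  ∃ a ∈ B, a ∈ c ∧ ¬ Sol q D a a

/-- `H(D,q)` admits a matching saturating the set `V₁` of blocks of `D`: an injective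
assignment of an `H`-edge to every block. -/
def SaturatingMatching (l : ℕ) (q : Query n Var) (D : Set (Fin n → Elem)) : Prop :=
  ∃ M : Set (Fin n → Elem) → Set (Fin n → Elem),
    (∀ x ∈ D, HEdge l q D (Block l D x) (M (Block l D x))) ∧
    (∀ x ∈ D, ∀ y ∈ D, M (Block l D x) = M (Block l D y) → Block l D x = Block l D y)

/-- `D` is a clique-database for `q`: every connected component of `G(D,q)` is a
quasi-clique. -/
def CliqueDB (l : ℕ) (q : Query n Var) (D : Set (Fin n → Elem)) : Prop :=
  ∀ a ∈ D, QuasiClique l q D (gComp q D a)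

/-- `q` is a clique-query: every database (over `Elem`) is a clique-database for `q`. -/
def CliqueQuery (l : ℕ) (q : Query n Var) (Elem : Type*) : Prop :=
  ∀ D : Set (Fin n → Elem), D.Finite → CliqueDB l q D

/-- One step of `q`-connectedness between (the blocks of) two facts of `D`:
either they are in the same block, or some fact of the block of `x` and some fact
of the block of `y` form a solution. -/
def qConnRel (l : ℕ) (q : Query n Var) (D : Set (Fin n → Elem))
    (x y : Fin n → Elem) : Prop :=
  keyEq l x y ∨ ∃ a b, a ∈ Block l D x ∧ b ∈ Block l D y ∧ SolSym q D a b

/-- The blocks of `x` and of `y` are `q`-connected in `D`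
(reflexive-symmetric-transitive closure). -/
def qConn (l : ℕ) (q : Query n Var) (D : Set (Fin n → Elem))
    (x y : Fin n → Elem) : Prop :=
  Relation.EqvGen (qConnRel l q D) x y

/-- The `q`-connected component of (the block of) the fact `x` in `D`. -/
def qComponent (l : ℕ) (q : Query n Var) (D : Set (Fin n → Elem))
    (x : Fin n → Elem) : Set (Fin n → Elem) :=
  {y ∈ D | qConn l q D x y}

end CQA

/-- The query `q₅ = R(x; y x) ∧ R(y; x u)` with `A = (x,y,x)`, `B = (y,x,u)`,
over variables `x = 0, y = 1, u = 2`. -/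
def q5 : CQA.Query 3 ℕ := (![0, 1, 0], ![1, 0, 2])

/-! A solution `(a, b)` of `q₅` swaps the first two entries: `b 0 = a 1` and `b 1 = a 0`.
Hence along solutions `(d, e)` and `(e, f)` the key of `f` is `e 1 = d 0`, the key of `d`.
In a tripath the two ends `d, f` of the center lie in the blocks of the two distinct children
of the branching block, so they cannot be key-equal. -/

namespace CQA

theorem keyEq_one_iff {n : ℕ} {α : Type*} (s t : Fin (n + 1) → α) :
    keyEq 1 s t ↔ s 0 = t 0 := by
  refine ⟨fun h => h 0 Nat.one_pos, fun h i hi => ?_⟩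
  obtain rfl : i = 0 := Fin.ext (Nat.lt_one_iff.mp hi)
  exact h

variable {l n : ℕ} {α : Type*}

theorem keyEq.symm {s t : Fin n → α} (h : keyEq l s t) : keyEq l t s :=
  fun i hi => (h i hi).symm

theorem keyEq.trans {s t u : Fin n → α} (hst : keyEq l s t) (htu : keyEq l t u) :
    keyEq l s u :=
  fun i hi => (hst i hi).trans (htu i hi)

theorem Block_eq_of_keyEq (D : Set (Fin n → α)) {a b : Fin n → α} (h : keyEq l a b) :
    Block l D a = Block l D b := by
  ext c
  exact and_congr_right fun _ => ⟨h.symm.trans, h.trans⟩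

namespace Tripath

variable {Var : Type*} {q : Query n Var} {Θ : Set (Fin n → α)}

theorem bFact_mem_blk (T : Tripath l q Θ) {i : Fin T.m} (hi : i ≠ T.root) :
    T.bFact i ∈ T.blk i := by
  by_cases h1 : i = T.leaf1
  · subst h1; rw [T.leaf1_blk]; rfl
  by_cases h2 : i = T.leaf2
  · subst h2; rw [T.leaf2_blk]; rfl
  rw [(T.other_blk i hi h1 h2).2]
  exact Or.inr rfl

theorem eq_of_keyEq_of_mem_blk (T : Tripath l q Θ) {i j : Fin T.m} {a b : Fin n → α}
    (ha : a ∈ T.blk i) (hb : b ∈ T.blk j) (hab : keyEq l a b) : i = j := by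
  obtain ⟨x, -, hx⟩ := T.blk_is_block i
  obtain ⟨y, -, hy⟩ := T.blk_is_block j
  rw [hx] at ha
  rw [hy] at hb
  apply T.blk_inj
  rw [hx, hy, Block_eq_of_keyEq Θ (ha.2.trans (hab.trans hb.2.symm))]

theorem ne_root_of_parent_eq_some (T : Tripath l q Θ) {i j : Fin T.m}
    (h : T.parent i = some j) : i ≠ T.root := by
  rintro rfl
  rw [T.parent_root] at h
  cases h

theorem not_keyEq_dc_fc (T : Tripath l q Θ) : ¬ keyEq l T.dc T.fc := fun h =>
  T.child_ne <| T.eq_of_keyEq_of_mem_blk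
    (T.bFact_mem_blk (T.ne_root_of_parent_eq_some T.parent_child1))
    (T.bFact_mem_blk (T.ne_root_of_parent_eq_some T.parent_child2)) h

end Tripath

end CQA

open CQA

theorem q5_solPair_swap {α : Type*} {a b : Fin 3 → α} (h : solPair q5 a b) :
    b 0 = a 1 ∧ b 1 = a 0 := by
  obtain ⟨_, hA, hB⟩ := h
  exact ⟨(hB 0).symm.trans (hA 1), (hB 1).symm.trans (hA 0)⟩

theorem q5_keyEq_of_solPair {α : Type*} {d e f : Fin 3 → α}
    (hde : solPair q5 d e) (hef : solPair q5 e f) : keyEq 1 d f :=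
  (keyEq_one_iff d f).mpr ((q5_solPair_swap hde).2.symm.trans (q5_solPair_swap hef).1.symm)

theorem q5_no_tripath_general (Elem : Type) :
    (∀ D : Set (Fin 3 → Elem), D.Finite →
      ∀ d e f : Fin 3 → Elem, CQA.Sol q5 D d e → CQA.Sol q5 D e f →
        (CQA.keyEq 1 d e ∨ CQA.keyEq 1 e f ∨ CQA.keyEq 1 d f)) ∧
    ¬ CQA.AdmitsTripath 1 q5 Elem := by
  refine ⟨fun D _ d e f hde hef => Or.inr (Or.inr (q5_keyEq_of_solPair hde.2.2 hef.2.2)), ?_⟩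
  rintro ⟨D, -, Θ, -, ⟨T⟩⟩
  exact T.not_keyEq_dc_fc (q5_keyEq_of_solPair T.center_sol1.2.2 T.center_sol2.2.2)

/-- (i) whenever `(d,e)` and `(e,f)` are solutions to `q₅`, two of
`d, e, f` are key-equal; (ii) consequently `q₅` admits no tripath. -/
theorem q5_no_tripath (Elem : Type) [Countable Elem] [Infinite Elem] :
    (∀ D : Set (Fin 3 → Elem), D.Finite →
      ∀ d e f : Fin 3 → Elem, CQA.Sol q5 D d e → CQA.Sol q5 D e f →
        (CQA.keyEq 1 d e ∨ CQA.keyEq 1 e f ∨ CQA.keyEq 1 d f)) ∧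
    ¬ CQA.AdmitsTripath 1 q5 Elem :=
  q5_no_tripath_general Elem
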